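/- arXiv:1712.03629 — 4 statements merged into one kernel-verified Lean document; each statement's English description precedes it below -/
import Mathlib

section
/- Let B be a central division algebra over a local field K with ring of integers O_B and uniformizer π_B, and let Δ = M₂(O_B). If a unit λ ∈ GL₂(B) (integral with unit reduced norm up to integral unit scalars, as in the definition of units) normalizes Δ, i.e. λΔλ^{-1} = Δ, then λ ∈ Δ^×. -/
/-!
Measure a matrix by the largest absolute value of its entries. For a nonarchimedean absolute
value this is submultiplicative, and conjugating a matrix unit `E_jk` by `λ` puts the product of a
largest entry of `λ` and a largest entry of `λ⁻¹` into `λ E_jk λ⁻¹ ∈ Δ`, so `‖λ‖ ‖λ⁻¹‖ ≤ 1`.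
Since also `1 ≤ ‖λᵏ‖ ‖λ⁻ᵏ‖ ≤ ‖λᵏ‖ ‖λ⁻¹‖ᵏ`, this forces `‖λ‖ᵏ ≤ ‖λᵏ‖` for all `k`. An integral
equation `λⁿ = -∑_{i<n} aᵢ λⁱ` then gives `‖λ‖ⁿ ≤ max_{i<n} ‖λ‖ⁱ`, hence `‖λ‖ ≤ 1`. Because the
constant term is a unit, `λ⁻¹` is a root of the reversed polynomial, which is integral with unit
leading coefficient, and the same argument gives `‖λ⁻¹‖ ≤ 1`.
-/

open Polynomial

theorem Polynomial.aeval_reflect_units_inv {R A : Type*} [CommSemiring R] [Semiring A]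
    [Algebra R A] (u : Aˣ) {N : ℕ} {p : R[X]} (hp : p.natDegree ≤ N) :
    aeval (↑u⁻¹ : A) (reflect N p) = ↑u⁻¹ ^ N * aeval (u : A) p := by
  refine induction_with_natDegree_le
    (fun p => aeval (↑u⁻¹ : A) (reflect N p) = ↑u⁻¹ ^ N * aeval (u : A) p) N ?_ ?_ ?_ p hp
  · simp
  · intro n r _ hn
    have hcancel : (↑u⁻¹ : A) ^ n * (u : A) ^ n = 1 := by
      rw [← Units.val_pow_eq_pow_val, ← Units.val_pow_eq_pow_val, ← Units.val_mul, inv_pow,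
        inv_mul_cancel, Units.val_one]
    simp only [reflect_C_mul_X_pow, revAt_le hn, map_mul, aeval_C, map_pow, aeval_X,
      ← mul_assoc, ← Algebra.commutes]
    rw [← Nat.sub_add_cancel hn, pow_add, Nat.add_sub_cancel, mul_assoc, mul_assoc, hcancel,
      mul_one]
  · intro f g _ _ hf hg
    simp only [reflect_add, map_add, hf, hg, mul_add]

namespace Matrix

section EntrySup

variable {l m n B : Type*} [Fintype l] [Fintype m] [Fintype n] [Nonempty l] [Nonempty m]
  [Nonempty n] [Ring B] (ρ : AbsoluteValue B ℝ)

noncomputable def entrySup (x : Matrix m n B) : ℝ :=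
  Finset.univ.sup' Finset.univ_nonempty fun q : m × n => ρ (x q.1 q.2)

theorem le_entrySup (x : Matrix m n B) (i : m) (j : n) : ρ (x i j) ≤ entrySup ρ x :=
  Finset.le_sup' (fun q : m × n => ρ (x q.1 q.2)) (Finset.mem_univ (i, j))

theorem entrySup_le_iff {x : Matrix m n B} {C : ℝ} :
    entrySup ρ x ≤ C ↔ ∀ i j, ρ (x i j) ≤ C := by
  simp [entrySup, Finset.sup'_le_iff, Prod.forall]

theorem exists_entrySup_eq (x : Matrix m n B) : ∃ i j, entrySup ρ x = ρ (x i j) := by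
  obtain ⟨q, -, hq⟩ :=
    Finset.exists_mem_eq_sup' Finset.univ_nonempty fun q : m × n => ρ (x q.1 q.2)
  exact ⟨q.1, q.2, hq⟩

theorem entrySup_nonneg (x : Matrix m n B) : 0 ≤ entrySup ρ x :=
  (ρ.nonneg _).trans (le_entrySup ρ x (Classical.arbitrary m) (Classical.arbitrary n))

theorem entrySup_neg (x : Matrix m n B) : entrySup ρ (-x) = entrySup ρ x := by
  simp [entrySup]

theorem entrySup_smul {K : Type*} [CommSemiring K] [Algebra K B] (ρK : AbsoluteValue K ℝ)
    (hext : ∀ a, ρ (algebraMap K B a) = ρK a) (a : K) (x : Matrix m n B) :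
    entrySup ρ (a • x) = ρK a * entrySup ρ x := by
  have hentry (i : m) (j : n) : ρ ((a • x) i j) = ρK a * ρ (x i j) := by
    rw [smul_apply, Algebra.smul_def, map_mul, hext]
  refine le_antisymm ((entrySup_le_iff ρ).2 fun i j => ?_) ?_
  · rw [hentry]
    exact mul_le_mul_of_nonneg_left (le_entrySup ρ x i j) (ρK.nonneg a)
  · obtain ⟨i, j, hij⟩ := exists_entrySup_eq ρ x
    rw [hij, ← hentry]
    exact le_entrySup ρ _ i j

variable {ρ}

theorem entrySup_sum_le (hna : IsNonarchimedean ρ) {ι : Type*} (s : Finset ι)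
    (f : ι → Matrix m n B) {C : ℝ} (hC : 0 ≤ C) (h : ∀ k ∈ s, entrySup ρ (f k) ≤ C) :
    entrySup ρ (∑ k ∈ s, f k) ≤ C := by
  refine (entrySup_le_iff ρ).2 fun i j => ?_
  rw [sum_apply]
  exact hna.apply_sum_le.trans <|
    Real.iSup_le (fun k => (le_entrySup ρ _ i j).trans (h k k.2)) hC

theorem entrySup_mul_le (hna : IsNonarchimedean ρ) (x : Matrix l m B) (y : Matrix m n B) :
    entrySup ρ (x * y) ≤ entrySup ρ x * entrySup ρ y := by
  refine (entrySup_le_iff ρ).2 fun i j => ?_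
  rw [mul_apply]
  refine hna.apply_sum_le.trans <|
    Real.iSup_le (fun k => ?_) (mul_nonneg (entrySup_nonneg ρ x) (entrySup_nonneg ρ y))
  rw [map_mul]
  exact mul_le_mul (le_entrySup ρ x i k) (le_entrySup ρ y k j) (ρ.nonneg _)
    (entrySup_nonneg ρ x)

variable [DecidableEq n] [Nontrivial B]

theorem entrySup_one : entrySup ρ (1 : Matrix n n B) = 1 := by
  refine le_antisymm ((entrySup_le_iff ρ).2 fun i j => ?_) ?_
  · rw [one_apply]
    split_ifs <;> simp
  · have := Classical.arbitrary n
    simpa using le_entrySup ρ (1 : Matrix n n B) this this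

theorem entrySup_pow_le (hna : IsNonarchimedean ρ) (x : Matrix n n B) (k : ℕ) :
    entrySup ρ (x ^ k) ≤ entrySup ρ x ^ k := by
  induction k with
  | zero => rw [pow_zero, pow_zero, entrySup_one]
  | succ k ih =>
    rw [pow_succ, pow_succ]
    exact (entrySup_mul_le hna _ _).trans
      (mul_le_mul_of_nonneg_right ih (entrySup_nonneg ρ x))

theorem one_le_entrySup_mul_of_mul_eq_one (hna : IsNonarchimedean ρ) {x y : Matrix n n B}
    (h : x * y = 1) : 1 ≤ entrySup ρ x * entrySup ρ y :=
  entrySup_one (ρ := ρ) (n := n) ▸ h ▸ entrySup_mul_le hna x y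

theorem entrySup_mul_entrySup_le_one_of_conj_le_one {x y : Matrix n n B}
    (h : ∀ z : Matrix n n B, (∀ i j, ρ (z i j) ≤ 1) → ∀ i j, ρ ((x * z * y) i j) ≤ 1) :
    entrySup ρ x * entrySup ρ y ≤ 1 := by
  obtain ⟨i, j, hx⟩ := exists_entrySup_eq ρ x
  obtain ⟨k, l, hy⟩ := exists_entrySup_eq ρ y
  have hsingle : ∀ a b, ρ ((single j k 1 : Matrix n n B) a b) ≤ 1 := fun a b => by
    rw [single_apply]
    split_ifs <;> simp
  have hentry : (x * (single j k 1 : Matrix n n B) * y) i l = x i j * y k l := by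
    rw [Matrix.mul_assoc, mul_apply, Finset.sum_eq_single j (fun a _ ha => by
      rw [single_mul_apply_of_ne _ _ _ _ _ ha, mul_zero]) (by simp),
      single_mul_apply_same, one_mul]
  rw [hx, hy, ← map_mul, ← hentry]
  exact h _ hsingle i l

theorem entrySup_pow_le_entrySup_pow_of_units (hna : IsNonarchimedean ρ)
    (u : (Matrix n n B)ˣ)
    (hu : entrySup ρ (u : Matrix n n B) * entrySup ρ (↑u⁻¹ : Matrix n n B) ≤ 1) (k : ℕ) :
    entrySup ρ (u : Matrix n n B) ^ k ≤ entrySup ρ ((u : Matrix n n B) ^ k) := by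
  have hinv : (u : Matrix n n B) ^ k * (↑u⁻¹ : Matrix n n B) ^ k = 1 := by
    rw [← Units.val_pow_eq_pow_val, ← Units.val_pow_eq_pow_val, inv_pow, Units.mul_inv]
  have hlower :
      1 ≤ entrySup ρ ((u : Matrix n n B) ^ k) * entrySup ρ (↑u⁻¹ : Matrix n n B) ^ k :=
    (one_le_entrySup_mul_of_mul_eq_one hna hinv).trans <|
      mul_le_mul_of_nonneg_left (entrySup_pow_le hna _ k) (entrySup_nonneg ρ _)
  calc entrySup ρ (u : Matrix n n B) ^ k
      ≤ entrySup ρ (u : Matrix n n B) ^ k *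
          (entrySup ρ ((u : Matrix n n B) ^ k) * entrySup ρ (↑u⁻¹ : Matrix n n B) ^ k) :=
        le_mul_of_one_le_right (pow_nonneg (entrySup_nonneg ρ _) k) hlower
    _ = entrySup ρ ((u : Matrix n n B) ^ k) *
          (entrySup ρ (u : Matrix n n B) * entrySup ρ (↑u⁻¹ : Matrix n n B)) ^ k := by ring
    _ ≤ entrySup ρ ((u : Matrix n n B) ^ k) :=
        mul_le_of_le_one_right (entrySup_nonneg ρ _)
          (pow_le_one₀ (mul_nonneg (entrySup_nonneg ρ _) (entrySup_nonneg ρ _)) hu)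

theorem entrySup_le_one_of_aeval_eq_zero {K : Type*} [CommRing K] [Algebra K B]
    (ρK : AbsoluteValue K ℝ) (hna : IsNonarchimedean ρ) (hext : ∀ a, ρ (algebraMap K B a) = ρK a)
    {x : Matrix n n B} {q : K[X]} (hdeg : 0 < q.natDegree) (hlead : ρK q.leadingCoeff = 1)
    (hcoeff : ∀ i, ρK (q.coeff i) ≤ 1) (hq : aeval x q = 0)
    (hpow : ∀ k, entrySup ρ x ^ k ≤ entrySup ρ (x ^ k)) :
    entrySup ρ x ≤ 1 := by
  set c := entrySup ρ x
  by_contra! hc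
  have hrel : q.leadingCoeff • x ^ q.natDegree =
      -∑ i ∈ Finset.range q.natDegree, q.coeff i • x ^ i := by
    rw [aeval_eq_sum_range, Finset.sum_range_succ] at hq
    exact eq_neg_of_add_eq_zero_right hq
  have hupper : entrySup ρ (x ^ q.natDegree) ≤ c ^ (q.natDegree - 1) := by
    rw [← one_mul (entrySup ρ _), ← hlead, ← entrySup_smul ρ ρK hext, hrel, entrySup_neg]
    refine entrySup_sum_le hna _ _ (pow_nonneg (entrySup_nonneg ρ x) _) fun i hi => ?_
    rw [entrySup_smul ρ ρK hext]
    calc ρK (q.coeff i) * entrySup ρ (x ^ i) ≤ 1 * c ^ i :=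
          mul_le_mul (hcoeff i) (entrySup_pow_le hna x i) (entrySup_nonneg ρ _) zero_le_one
      _ ≤ c ^ (q.natDegree - 1) := by
          rw [one_mul]
          exact pow_le_pow_right₀ hc.le (Nat.le_sub_one_of_lt (Finset.mem_range.1 hi))
  exact ((hpow _).trans hupper).not_gt (pow_lt_pow_right₀ hc (Nat.sub_one_lt_of_lt hdeg))

end EntrySup

end Matrix

open Matrix

theorem normalizing_unit_in_maximal_order_general
    (K : Type*) [Field K] (ρK : AbsoluteValue K ℝ)
    (B : Type*) [DivisionRing B] [Algebra K B]
    (ρ : AbsoluteValue B ℝ) (hna : IsNonarchimedean ρ)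
    (hext : ∀ a : K, ρ (algebraMap K B a) = ρK a)
    (lam mu : Matrix (Fin 2) (Fin 2) B)
    (hinv₁ : lam * mu = 1) (hinv₂ : mu * lam = 1)
    -- λ is a unit: it satisfies a monic integral equation with unit constant term
    (p : Polynomial K) (hmonic : p.Monic) (hdeg : 0 < p.natDegree)
    (hint : ∀ i, ρK (p.coeff i) ≤ 1) (hconst : ρK (p.coeff 0) = 1)
    (heval : Polynomial.aeval lam p = 0)
    -- λ normalizes Δ = M₂(O_B)
    (hnorm : ∀ x : Matrix (Fin 2) (Fin 2) B,
      (∀ i j, ρ (x i j) ≤ 1) ↔ (∀ i j, ρ ((lam * x * mu) i j) ≤ 1)) :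
    (∀ i j, ρ (lam i j) ≤ 1) ∧ (∀ i j, ρ (mu i j) ≤ 1) := by
  let u : (Matrix (Fin 2) (Fin 2) B)ˣ := ⟨lam, mu, hinv₁, hinv₂⟩
  have hu : entrySup ρ lam * entrySup ρ mu ≤ 1 :=
    entrySup_mul_entrySup_le_one_of_conj_le_one fun x => (hnorm x).1
  have hp0 : p.coeff 0 ≠ 0 := fun h => by simp [h] at hconst
  have hlam : entrySup ρ lam ≤ 1 :=
    entrySup_le_one_of_aeval_eq_zero ρK hna hext hdeg (by rw [hmonic.leadingCoeff, map_one])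
      hint heval (entrySup_pow_le_entrySup_pow_of_units hna u hu)
  have hmu : entrySup ρ mu ≤ 1 := by
    refine entrySup_le_one_of_aeval_eq_zero ρK hna hext (q := p.reverse) ?_ ?_
      (fun i => by rw [coeff_reverse]; exact hint _) ?_
      (entrySup_pow_le_entrySup_pow_of_units hna u⁻¹ (by rwa [inv_inv, mul_comm]))
    · rwa [reverse_natDegree, natTrailingDegree_eq_zero.2 (.inr hp0)]
    · rwa [reverse_leadingCoeff, trailingCoeff_eq_coeff_zero hp0]
    · change aeval (↑u⁻¹ : Matrix (Fin 2) (Fin 2) B) (reflect p.natDegree p) = 0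
      rw [aeval_reflect_units_inv u le_rfl]
      exact mul_eq_zero_of_right _ heval
  exact ⟨(entrySup_le_iff ρ).1 hlam, (entrySup_le_iff ρ).1 hmu⟩

/-- Lemma 3.2, for the standard maximal order: let B be a central
division algebra over a local field K with absolute value ρ extending that of K,
and let Δ = M₂(O_B) be the standard maximal order (matrices all of whose entries
have ρ ≤ 1).  If a unit λ of M₂(B) — an invertible element (with two-sided
inverse μ) satisfying a monic polynomial over O_K with unit constant term —
normalizes Δ, i.e. λΔλ⁻¹ = Δ, then λ and λ⁻¹ both lie in Δ (so λ ∈ Δ^×). -/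
theorem normalizing_unit_in_maximal_order
    (K : Type*) [Field K] (ρK : AbsoluteValue K ℝ) (hnaK : IsNonarchimedean ρK)
    (B : Type*) [DivisionRing B] [Algebra K B]
    (ρ : AbsoluteValue B ℝ) (hna : IsNonarchimedean ρ)
    (hext : ∀ a : K, ρ (algebraMap K B a) = ρK a)
    (lam mu : Matrix (Fin 2) (Fin 2) B)
    (hinv₁ : lam * mu = 1) (hinv₂ : mu * lam = 1)
    -- λ is a unit: it satisfies a monic integral equation with unit constant term
    (p : Polynomial K) (hmonic : p.Monic) (hdeg : 0 < p.natDegree)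
    (hint : ∀ i, ρK (p.coeff i) ≤ 1) (hconst : ρK (p.coeff 0) = 1)
    (heval : Polynomial.aeval lam p = 0)
    -- λ normalizes Δ = M₂(O_B)
    (hnorm : ∀ x : Matrix (Fin 2) (Fin 2) B,
      (∀ i j, ρ (x i j) ≤ 1) ↔ (∀ i j, ρ ((lam * x * mu) i j) ≤ 1)) :
    (∀ i j, ρ (lam i j) ≤ 1) ∧ (∀ i j, ρ (mu i j) ≤ 1) :=
  normalizing_unit_in_maximal_order_general K ρK B ρ hna hext lam mu hinv₁ hinv₂ p hmonic hdeg hint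
    hconst heval hnorm
end

section
/- Let B be a central division algebra over a local field with ring of integers O_B, uniformizer π_B generating the maximal two-sided ideal M_Δ of Δ = M₂(O_B). For t ≥ 1, define Δ^{[t]} = {x ∈ Δ : the image of x in Δ/M_Δ^t lies in the center of Δ/M_Δ^t}. Then an element h ∈ M₂(B) lies in every maximal order at distance at most t from Δ in the Bruhat–Tits tree if and only if h ∈ Δ^{[t]}. Concretely: h belongs to every conjugate uΔu^{-1} with u ∈ GL₂(B) such that the corresponding lattice classes are at distance ≤ t from O_B² if and only if h ≡ c·Id mod π_B^t M₂(O_B) for some c in the center of O_B/π_B^t O_B. -/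
/-!
If `h = c + π^t m` with `m` integral and `c` central modulo `π^t`, then `h` acts on any lattice `Λ`
with `π^t O_B² ⊆ Λ b ⊆ O_B²` as right multiplication by `c` up to an error in `π^t O_B² ⊆ Λ b`;
hence `h` preserves `Λ`, i.e. lies in its maximal order.

Conversely, test `h` against the orders of the lattices spanned by the columns of `1`,
`diag(π^t, 1)` and `[[1, 0], [x, π^t]]` with `x` integral, all at distance `≤ t`. They force `h`
integral, `h₀₁ ≡ 0` and `h₁₀ - x h₀₀ + h₁₁ x - x h₀₁ x ≡ 0 (mod π^t)`; `x = 0` and `x = 1` give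
`h₁₀ ≡ 0` and `h₁₁ ≡ h₀₀`, and then general `x` gives `h₀₀ x ≡ x h₀₀`.
-/

noncomputable section

variable {B : Type*} [DivisionRing B]

/-- The standard O_B-lattice O_B² transformed by u: the right O_B-lattice u·O_B². -/
def latticeOf (ρ : AbsoluteValue B ℝ) (u : Matrix (Fin 2) (Fin 2) B) :
    Set (Fin 2 → B) :=
  {w | ∃ v : Fin 2 → B, (∀ i, ρ (v i) ≤ 1) ∧ w = u.mulVec v}

/-- The lattice class of u·O_B² lies at distance ≤ t from the class of O_B²:
some right-scalar multiple (homothety) of u·O_B² is sandwiched between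
O_B²·π_B^t and O_B². -/
def latticeDistLE (ρ : AbsoluteValue B ℝ) (πB : B) (t : ℕ)
    (u : Matrix (Fin 2) (Fin 2) B) : Prop :=
  ∃ b : B, b ≠ 0 ∧
    (∀ w ∈ latticeOf ρ u, ∀ i, ρ (w i * b) ≤ 1) ∧
    (∀ v : Fin 2 → B, (∀ i, ρ (v i) ≤ 1) →
      ∃ w ∈ latticeOf ρ u, (fun i => v i * πB ^ t) = fun i => w i * b)

/-- Membership in the conjugate maximal order u·M₂(O_B)·u⁻¹. -/
def memConjOrder (ρ : AbsoluteValue B ℝ) (u uinv : Matrix (Fin 2) (Fin 2) B)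
    (h : Matrix (Fin 2) (Fin 2) B) : Prop :=
  ∃ m : Matrix (Fin 2) (Fin 2) B, (∀ i j, ρ (m i j) ≤ 1) ∧ h = u * m * uinv

open Matrix

section Ultrametric

variable {R : Type*} [Ring R] {ρ : AbsoluteValue R ℝ} {r : ℝ} {a b : R}

theorem IsNonarchimedean.apply_add_le (hna : IsNonarchimedean ρ) (ha : ρ a ≤ r) (hb : ρ b ≤ r) :
    ρ (a + b) ≤ r :=
  (hna a b).trans (max_le ha hb)

theorem IsNonarchimedean.apply_sub_le (hna : IsNonarchimedean ρ) (ha : ρ a ≤ r) (hb : ρ b ≤ r) :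
    ρ (a - b) ≤ r := by
  rw [sub_eq_add_neg]
  exact hna.apply_add_le ha (by rwa [ρ.map_neg])

theorem AbsoluteValue.apply_mul_le_of_le_one_left (ha : ρ a ≤ 1) (hb : ρ b ≤ r) :
    ρ (a * b) ≤ r := by
  rw [map_mul]
  exact (mul_le_of_le_one_left (ρ.nonneg b) ha).trans hb

theorem AbsoluteValue.apply_mul_le_of_le_one_right (ha : ρ a ≤ r) (hb : ρ b ≤ 1) :
    ρ (a * b) ≤ r := by
  rw [map_mul]
  exact (mul_le_of_le_one_right (ρ.nonneg a) hb).trans ha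

theorem IsNonarchimedean.apply_mulVec_le (hna : IsNonarchimedean ρ) {M : Matrix (Fin 2) (Fin 2) R}
    {v : Fin 2 → R} {i : Fin 2} (h : ∀ j, ρ (M i j * v j) ≤ r) : ρ ((M *ᵥ v) i) ≤ r := by
  rw [mulVec, dotProduct, Fin.sum_univ_two]
  exact hna.apply_add_le (h 0) (h 1)

end Ultrametric

section Lattice

variable {ρ : AbsoluteValue B ℝ} {u uinv : Matrix (Fin 2) (Fin 2) B}

theorem add_mem_latticeOf (hna : IsNonarchimedean ρ) {w w' : Fin 2 → B}
    (hw : w ∈ latticeOf ρ u) (hw' : w' ∈ latticeOf ρ u) : w + w' ∈ latticeOf ρ u := by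
  obtain ⟨v, hv, rfl⟩ := hw
  obtain ⟨v', hv', rfl⟩ := hw'
  exact ⟨v + v', fun i => hna.apply_add_le (hv i) (hv' i), (mulVec_add u v v').symm⟩

theorem mul_right_mem_latticeOf {w : Fin 2 → B} (hw : w ∈ latticeOf ρ u) {s : B} (hs : ρ s ≤ 1) :
    (fun i => w i * s) ∈ latticeOf ρ u := by
  obtain ⟨v, hv, rfl⟩ := hw
  refine ⟨fun j => v j * s, fun i => ρ.apply_mul_le_of_le_one_left (hv i) hs, ?_⟩
  funext i
  simp [mulVec, dotProduct, Fin.sum_univ_two, add_mul, mul_assoc]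

theorem col_mem_latticeOf (j : Fin 2) : u.col j ∈ latticeOf ρ u := by
  refine ⟨Pi.single j 1, fun i => ?_, (mulVec_single_one u j).symm⟩
  by_cases hij : i = j <;> simp [hij]

theorem apply_mulVec_le_one_of_mem_latticeOf (hvu : uinv * u = 1) {w : Fin 2 → B}
    (hw : w ∈ latticeOf ρ u) (i : Fin 2) : ρ ((uinv *ᵥ w) i) ≤ 1 := by
  obtain ⟨v, hv, rfl⟩ := hw
  rw [mulVec_mulVec, hvu, one_mulVec]
  exact hv i

theorem memConjOrder_iff (huv : u * uinv = 1) (hvu : uinv * u = 1) {h : Matrix (Fin 2) (Fin 2) B} :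
    memConjOrder ρ u uinv h ↔ ∀ i j, ρ ((uinv * h * u) i j) ≤ 1 := by
  constructor
  · rintro ⟨m, hm, rfl⟩
    have : uinv * (u * m * uinv) * u = m := by
      simp only [← mul_assoc, hvu, one_mul]
      rw [mul_assoc, hvu, mul_one]
    rwa [this]
  · intro hconj
    refine ⟨uinv * h * u, hconj, ?_⟩
    simp only [← mul_assoc, huv, one_mul]
    rw [mul_assoc, huv, mul_one]

variable {πB : B} {t : ℕ}

theorem latticeDistLE_of_le (hna : IsNonarchimedean ρ) (huv : u * uinv = 1)
    (hu : ∀ i j, ρ (u i j) ≤ 1) (huinv : ∀ i j, ρ (uinv i j) * ρ πB ^ t ≤ 1) :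
    latticeDistLE ρ πB t u := by
  refine ⟨1, one_ne_zero, ?_, fun v hv => ?_⟩
  · rintro _ ⟨v, hv, rfl⟩ i
    rw [mul_one]
    exact hna.apply_mulVec_le fun j => ρ.apply_mul_le_of_le_one_left (hu i j) (hv j)
  · refine ⟨_, ⟨uinv *ᵥ fun i => v i * πB ^ t, fun i => hna.apply_mulVec_le fun j => ?_, rfl⟩, ?_⟩
    · rw [map_mul, map_mul, map_pow]
      refine le_trans ?_ (huinv i j)
      exact mul_le_mul_of_nonneg_left (mul_le_of_le_one_left (by positivity) (hv j)) (ρ.nonneg _)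
    · rw [mulVec_mulVec, huv, one_mulVec]
      simp

theorem exists_mem_latticeOf_mul_eq (hπ : πB ≠ 0) {b : B}
    (hb : ∀ v : Fin 2 → B, (∀ i, ρ (v i) ≤ 1) →
      ∃ w ∈ latticeOf ρ u, (fun i => v i * πB ^ t) = fun i => w i * b)
    {d : Fin 2 → B} (hd : ∀ i, ρ (d i) ≤ ρ πB ^ t) :
    ∃ w ∈ latticeOf ρ u, ∀ i, d i = w i * b := by
  have hπt : πB ^ t ≠ 0 := pow_ne_zero t hπ
  obtain ⟨w, hw, hdw⟩ := hb (fun i => d i * (πB ^ t)⁻¹) fun i => by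
    rw [map_mul, map_inv₀, map_pow, ← div_eq_mul_inv, div_le_one (pow_pos (ρ.pos hπ) t)]
    exact hd i
  refine ⟨w, hw, fun i => ?_⟩
  simpa [mul_assoc, inv_mul_cancel₀ hπt] using congrFun hdw i

end Lattice

section Congruence

variable {ρ : AbsoluteValue B ℝ} {h : Matrix (Fin 2) (Fin 2) B} {c : B} {r : ℝ}

theorem apply_mulVec_sub_mul_le (hna : IsNonarchimedean ρ)
    (hcc : ∀ x : B, ρ x ≤ 1 → ρ (c * x - x * c) ≤ r)
    (hce : ∀ i j, ρ (h i j - (if i = j then c else 0)) ≤ r)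
    {x : Fin 2 → B} (hx : ∀ i, ρ (x i) ≤ 1) (i : Fin 2) :
    ρ ((h *ᵥ x) i - x i * c) ≤ r := by
  have split : (h *ᵥ x) i - x i * c =
      ((h - diagonal fun _ => c) *ᵥ x) i + (c * x i - x i * c) := by
    rw [sub_mulVec, Pi.sub_apply, mulVec_diagonal]
    abel
  rw [split]
  refine hna.apply_add_le (hna.apply_mulVec_le fun j => ?_) (hcc _ (hx i))
  exact ρ.apply_mul_le_of_le_one_right (by simpa [diagonal_apply] using hce i j) (hx j)

variable {πB : B} {t : ℕ} {u uinv : Matrix (Fin 2) (Fin 2) B}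

/-- Modulo `O_B²·π^t ⊆ Λ·b` one has `h·w·b ≡ w·b·c = w·(b c b⁻¹)·b`, so `h·w ∈ w·(b c b⁻¹) + Λ`. -/
theorem mulVec_mem_latticeOf_of_latticeDistLE (hna : IsNonarchimedean ρ) (hπ : πB ≠ 0)
    (hc : ρ c ≤ 1) (hcc : ∀ x : B, ρ x ≤ 1 → ρ (c * x - x * c) ≤ ρ πB ^ t)
    (hce : ∀ i j, ρ (h i j - (if i = j then c else 0)) ≤ ρ πB ^ t)
    (hu : latticeDistLE ρ πB t u) {w : Fin 2 → B} (hw : w ∈ latticeOf ρ u) :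
    h *ᵥ w ∈ latticeOf ρ u := by
  obtain ⟨b, hb0, hb1, hb2⟩ := hu
  set x : Fin 2 → B := fun i => w i * b
  obtain ⟨w', hw', hdw'⟩ := exists_mem_latticeOf_mul_eq hπ hb2
    (apply_mulVec_sub_mul_le hna hcc hce (hb1 w hw))
  have hs : ρ (b * c * b⁻¹) ≤ 1 := by
    rwa [map_mul, map_mul, map_inv₀, mul_right_comm, mul_inv_cancel₀ (ρ.pos hb0).ne', one_mul]
  have hhw : h *ᵥ w = (fun i => w i * (b * c * b⁻¹)) + w' := by
    funext i
    refine mul_right_cancel₀ hb0 ?_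
    calc (h *ᵥ w) i * b = (h *ᵥ x) i := by
          simp [x, mulVec, dotProduct, Fin.sum_univ_two, add_mul, mul_assoc]
      _ = x i * c + w' i * b := by rw [← hdw' i]; abel
      _ = ((fun i => w i * (b * c * b⁻¹)) + w') i * b := by
          simp [x, add_mul, mul_assoc, inv_mul_cancel₀ hb0]
  rw [hhw]
  exact add_mem_latticeOf hna (mul_right_mem_latticeOf hw hs) hw'

theorem memConjOrder_of_congr_scalar (hna : IsNonarchimedean ρ) (hπ : πB ≠ 0)
    (hc : ρ c ≤ 1) (hcc : ∀ x : B, ρ x ≤ 1 → ρ (c * x - x * c) ≤ ρ πB ^ t)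
    (hce : ∀ i j, ρ (h i j - (if i = j then c else 0)) ≤ ρ πB ^ t)
    (huv : u * uinv = 1) (hvu : uinv * u = 1) (hu : latticeDistLE ρ πB t u) :
    memConjOrder ρ u uinv h := by
  refine (memConjOrder_iff huv hvu).2 fun i j => ?_
  have hcol : (uinv * h * u) i j = (uinv *ᵥ (h *ᵥ u.col j)) i := by
    rw [← mulVec_single_one, mulVec_mulVec, mulVec_mulVec, mulVec_single_one]
    rfl
  rw [hcol]
  exact apply_mulVec_le_one_of_mem_latticeOf hvu
    (mulVec_mem_latticeOf_of_latticeDistLE hna hπ hc hcc hce hu (col_mem_latticeOf j)) i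

end Congruence

section BallTests

variable {ρ : AbsoluteValue B ℝ} {πB : B} {t : ℕ} {h : Matrix (Fin 2) (Fin 2) B}

theorem le_of_apply_inv_mul_le_one {ϖ y : B} (hϖ : ϖ ≠ 0) (hy : ρ (ϖ⁻¹ * y) ≤ 1) :
    ρ y ≤ ρ ϖ := by
  rwa [map_mul, map_inv₀, inv_mul_le_iff₀ (ρ.pos hϖ), mul_one] at hy

variable (hna : IsNonarchimedean ρ)
  (H : ∀ u uinv : Matrix (Fin 2) (Fin 2) B, u * uinv = 1 → uinv * u = 1 →
    latticeDistLE ρ πB t u → memConjOrder ρ u uinv h)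
include hna H

theorem conj_apply_le_one_of_forall_memConjOrder {u uinv : Matrix (Fin 2) (Fin 2) B}
    (huv : u * uinv = 1) (hvu : uinv * u = 1) (hu : ∀ i j, ρ (u i j) ≤ 1)
    (huinv : ∀ i j, ρ (uinv i j) * ρ πB ^ t ≤ 1) (i j : Fin 2) :
    ρ ((uinv * h * u) i j) ≤ 1 :=
  (memConjOrder_iff huv hvu).1 (H u uinv huv hvu (latticeDistLE_of_le hna huv hu huinv)) i j

theorem apply_le_one_of_forall_memConjOrder (hπ : ρ πB < 1) (i j : Fin 2) : ρ (h i j) ≤ 1 := by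
  have hπt : ρ πB ^ t ≤ 1 := pow_le_one₀ (ρ.nonneg _) hπ.le
  simpa using conj_apply_le_one_of_forall_memConjOrder hna H (u := 1) (uinv := 1) (one_mul 1)
    (one_mul 1) (fun i j => by fin_cases i <;> fin_cases j <;> simp)
    (fun i j => by fin_cases i <;> fin_cases j <;> simp [hπt]) i j

theorem apply_zero_one_le_of_forall_memConjOrder (hπ : πB ≠ 0) (hπ1 : ρ πB < 1) :
    ρ (h 0 1) ≤ ρ πB ^ t := by
  have hϖ : πB ^ t ≠ 0 := pow_ne_zero t hπ
  have hρϖ : ρ πB ^ t ≠ 0 := (pow_pos (ρ.pos hπ) t).ne'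
  have hπt : ρ πB ^ t ≤ 1 := pow_le_one₀ (ρ.nonneg _) hπ1.le
  have hconj := conj_apply_le_one_of_forall_memConjOrder hna H
    (u := !![πB ^ t, 0; 0, 1]) (uinv := !![(πB ^ t)⁻¹, 0; 0, 1])
    (by simp [one_fin_two, mul_inv_cancel₀ hϖ]) (by simp [one_fin_two, inv_mul_cancel₀ hϖ])
    (fun i j => by fin_cases i <;> fin_cases j <;> simp [hπt])
    (fun i j => by fin_cases i <;> fin_cases j <;> simp [hπt, inv_mul_cancel₀ hρϖ]) 0 1
  have hentry : (!![(πB ^ t)⁻¹, 0; 0, 1] * h * !![πB ^ t, 0; 0, 1]) 0 1 = (πB ^ t)⁻¹ * h 0 1 := by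
    rw [eta_fin_two h, mul_fin_two, mul_fin_two]
    simp
  rw [← map_pow]
  exact le_of_apply_inv_mul_le_one hϖ (hentry ▸ hconj)

theorem apply_one_zero_sub_le_of_forall_memConjOrder (hπ : πB ≠ 0) (hπ1 : ρ πB < 1)
    {x : B} (hx : ρ x ≤ 1) :
    ρ (h 1 0 - x * h 0 0 + h 1 1 * x - x * (h 0 1 * x)) ≤ ρ πB ^ t := by
  have hϖ : πB ^ t ≠ 0 := pow_ne_zero t hπ
  have hρϖ : ρ πB ^ t ≠ 0 := (pow_pos (ρ.pos hπ) t).ne'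
  have hπt : ρ πB ^ t ≤ 1 := pow_le_one₀ (ρ.nonneg _) hπ1.le
  have hconj := conj_apply_le_one_of_forall_memConjOrder hna H
    (u := !![1, 0; x, πB ^ t]) (uinv := !![1, 0; -((πB ^ t)⁻¹ * x), (πB ^ t)⁻¹])
    (by simp [one_fin_two, mul_inv_cancel_left₀ hϖ, mul_inv_cancel₀ hϖ])
    (by simp [one_fin_two, inv_mul_cancel₀ hϖ])
    (fun i j => by fin_cases i <;> fin_cases j <;> simp [hπt, hx])
    (fun i j => by
      fin_cases i <;> fin_cases j <;> simp [hπt, inv_mul_cancel₀ hρϖ]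
      rwa [mul_right_comm, inv_mul_cancel₀ hρϖ, one_mul]) 1 0
  have hentry : (!![1, 0; -((πB ^ t)⁻¹ * x), (πB ^ t)⁻¹] * h * !![1, 0; x, πB ^ t]) 1 0 =
      (πB ^ t)⁻¹ * (h 1 0 - x * h 0 0 + h 1 1 * x - x * (h 0 1 * x)) := by
    rw [eta_fin_two h, mul_fin_two, mul_fin_two]
    simp
    noncomm_ring
  rw [← map_pow]
  exact le_of_apply_inv_mul_le_one hϖ (hentry ▸ hconj)

end BallTests

theorem IsNonarchimedean.congr_scalar_of_le {ρ : AbsoluteValue B ℝ} (hna : IsNonarchimedean ρ)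
    {r : ℝ} {h : Matrix (Fin 2) (Fin 2) B} (h01 : ρ (h 0 1) ≤ r)
    (h10 : ∀ x : B, ρ x ≤ 1 → ρ (h 1 0 - x * h 0 0 + h 1 1 * x - x * (h 0 1 * x)) ≤ r) :
    (∀ x : B, ρ x ≤ 1 → ρ (h 0 0 * x - x * h 0 0) ≤ r) ∧
      ∀ i j, ρ (h i j - (if i = j then h 0 0 else 0)) ≤ r := by
  have hc : ρ (h 1 0) ≤ r := by simpa using h10 0 (by simp)
  have hdx : ∀ x : B, ρ x ≤ 1 → ρ (h 1 1 * x - x * h 0 0) ≤ r := fun x hx => by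
    have hxbx : ρ (x * (h 0 1 * x)) ≤ r :=
      ρ.apply_mul_le_of_le_one_left hx (ρ.apply_mul_le_of_le_one_right h01 hx)
    have hsplit : h 1 1 * x - x * h 0 0 =
        (h 1 0 - x * h 0 0 + h 1 1 * x - x * (h 0 1 * x)) - h 1 0 + x * (h 0 1 * x) := by
      noncomm_ring
    rw [hsplit]
    exact hna.apply_add_le (hna.apply_sub_le (h10 x hx) hc) hxbx
  have hda : ρ (h 1 1 - h 0 0) ≤ r := by simpa using hdx 1 (by simp)
  refine ⟨fun x hx => ?_, fun i j => ?_⟩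
  · have hsplit : h 0 0 * x - x * h 0 0 = (h 1 1 * x - x * h 0 0) - (h 1 1 - h 0 0) * x := by
      noncomm_ring
    rw [hsplit]
    exact hna.apply_sub_le (hdx x hx) (ρ.apply_mul_le_of_le_one_right hda hx)
  · have hr : 0 ≤ r := (ρ.nonneg _).trans h01
    fin_cases i <;> fin_cases j <;> simpa

theorem ball_intersection_eq_congruence_order_general
    (ρ : AbsoluteValue B ℝ) (hna : IsNonarchimedean ρ)
    (πB : B)
    (hπB : 0 < ρ πB ∧ ρ πB < 1 ∧ ∀ x : B, x ≠ 0 → ρ x < 1 → ρ x ≤ ρ πB)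
    (t : ℕ)
    (h : Matrix (Fin 2) (Fin 2) B) :
    (∀ u uinv : Matrix (Fin 2) (Fin 2) B, u * uinv = 1 → uinv * u = 1 →
      latticeDistLE ρ πB t u → memConjOrder ρ u uinv h) ↔
    (∃ c : B, ρ c ≤ 1 ∧
      (∀ x : B, ρ x ≤ 1 → ρ (c * x - x * c) ≤ ρ πB ^ t) ∧
      (∀ i j, ρ (h i j - (if i = j then c else 0)) ≤ ρ πB ^ t)) := by
  obtain ⟨hπpos, hπ1, -⟩ := hπB
  have hπ : πB ≠ 0 := ρ.pos_iff.mp hπpos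
  constructor
  · intro H
    obtain ⟨hcomm, hentries⟩ := hna.congr_scalar_of_le
      (apply_zero_one_le_of_forall_memConjOrder hna H hπ hπ1)
      (fun x hx => apply_one_zero_sub_le_of_forall_memConjOrder hna H hπ hπ1 hx)
    exact ⟨h 0 0, apply_le_one_of_forall_memConjOrder hna H hπ1 0 0, hcomm, hentries⟩
  · rintro ⟨c, hc, hcc, hce⟩ u uinv huv hvu hu
    exact memConjOrder_of_congr_scalar hna hπ hc hcc hce huv hvu hu

/-- Lemma on Δ^{[t]}: let B be a central division algebra over a
local field with uniformizer π_B, Δ = M₂(O_B).  An element h of M₂(B) lies in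
every maximal order at distance ≤ t from Δ in the Bruhat–Tits tree (i.e. in every
conjugate uΔu⁻¹ whose lattice class is at distance ≤ t from that of O_B²) if and
only if h ∈ Δ^{[t]}, i.e. h ≡ c·Id mod π_B^t·M₂(O_B) for some c in O_B whose image
is central in O_B/π_B^t O_B. -/
theorem ball_intersection_eq_congruence_order
    (ρ : AbsoluteValue B ℝ) (hna : IsNonarchimedean ρ)
    (πB : B)
    (hπB : 0 < ρ πB ∧ ρ πB < 1 ∧ ∀ x : B, x ≠ 0 → ρ x < 1 → ρ x ≤ ρ πB)
    (hdisc : ∀ x : B, x ≠ 0 → ∃ k : ℤ, ρ x = ρ πB ^ k)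
    (t : ℕ) (ht : 1 ≤ t)
    (h : Matrix (Fin 2) (Fin 2) B) :
    (∀ u uinv : Matrix (Fin 2) (Fin 2) B, u * uinv = 1 → uinv * u = 1 →
      latticeDistLE ρ πB t u → memConjOrder ρ u uinv h) ↔
    (∃ c : B, ρ c ≤ 1 ∧
      (∀ x : B, ρ x ≤ 1 → ρ (c * x - x * c) ≤ ρ πB ^ t) ∧
      (∀ i j, ρ (h i j - (if i = j then c else 0)) ≤ ρ πB ^ t)) :=
  ball_intersection_eq_congruence_order_general ρ hna πB hπB t h

end
end

section
/- Let B be a central division algebra over a local field, Δ₀ = M₂(O_B), and let H ⊆ Δ₀ be an O_K-order. The neighbors of Δ₀ in the Bruhat–Tits tree that contain H are in bijection with the one-dimensional ℍ-submodules of 𝔹², where ℍ = (H + π_BΔ₀)/π_BΔ₀ ⊆ M₂(𝔹) and 𝔹 = O_B/π_B O_B is the residue (finite) field. Consequently the number of such neighbors is 0, 1, 2, or q^n + 1, where q^n = |𝔹|. -/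
/-!
Reduction modulo `π_B` identifies the lattice `Λ₀π_B + v·O_B` with the preimage in `O_B²` of the
line `𝔹·v̄`, so the neighbor order depends only on that line, and an integral matrix preserves the
lattice exactly when its reduction preserves the line. Distinct lines give distinct orders: if
`ℓ' ⊄ ℓ`, lift to `O_B` a vector `v` with `0 ≠ v̄ ∈ ℓ` and a functional `g` vanishing on `ℓ` but
not on `ℓ'`; the rank-one matrix `v·π_B⁻¹·g` preserves the lattice of `ℓ` but not that of `ℓ'`.
For the count: eigenvectors for distinct eigenvalues are independent, so a matrix of `M₂(𝔹)`
stabilizing three lines has the same eigenvalue on two of them and is scalar; hence either at most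
two lines are stable or all `q^n + 1` are.
-/

noncomputable section

variable {B : Type*} [DivisionRing B]

/-- The right O_B-lattice Λ₀·π_B + v·O_B, for v ∈ O_B² (Λ₀ = O_B²). -/
def nbrLattice (ρ : AbsoluteValue B ℝ) (πB : B) (v : Fin 2 → B) :
    Set (Fin 2 → B) :=
  {w | ∃ (z : Fin 2 → B) (b : B), (∀ i, ρ (z i) ≤ 1) ∧ ρ b ≤ 1 ∧
    w = fun i => z i * πB + v i * b}

/-- The neighbor maximal order End_{O_B}(Λ₀π_B + v·O_B) of Δ₀ = M₂(O_B). -/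
def nbrOrder (ρ : AbsoluteValue B ℝ) (πB : B) (v : Fin 2 → B) :
    Set (Matrix (Fin 2) (Fin 2) B) :=
  {m | ∀ w ∈ nbrLattice ρ πB v, m.mulVec w ∈ nbrLattice ρ πB v}

open Module Submodule Matrix

lemma Submodule.exists_ne_zero_eq_span_singleton {K V : Type*} [DivisionRing K] [AddCommGroup V]
    [Module K V] {ℓ : Submodule K V} (h : finrank K ℓ = 1) : ∃ a ≠ 0, ℓ = K ∙ a :=
  ⟨_, (Projectivization.mk'' ℓ h).rep_nonzero,
    by rw [← Projectivization.submodule_eq, Projectivization.submodule_mk'']⟩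

section Lines

variable {K V : Type*} [Field K] [AddCommGroup V] [Module K V]

lemma Submodule.sup_eq_top_of_finrank_eq_two (hV : finrank K V = 2) {ℓ₁ ℓ₂ : Submodule K V}
    (h₁ : finrank K ℓ₁ = 1) (h₂ : finrank K ℓ₂ = 1) (hne : ℓ₁ ≠ ℓ₂) : ℓ₁ ⊔ ℓ₂ = ⊤ := by
  have : FiniteDimensional K V := Module.finite_of_finrank_eq_succ hV
  have hinf : finrank K ↥(ℓ₁ ⊓ ℓ₂) = 0 := by
    by_contra h0
    have hle : finrank K ↥(ℓ₁ ⊓ ℓ₂) ≤ 1 := h₁ ▸ Submodule.finrank_mono inf_le_left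
    have inf_eq : ∀ {ℓ : Submodule K V}, finrank K ℓ = 1 → ℓ₁ ⊓ ℓ₂ ≤ ℓ → ℓ₁ ⊓ ℓ₂ = ℓ :=
      fun h hle' => Submodule.eq_of_le_of_finrank_eq hle' (by omega)
    exact hne ((inf_eq h₁ inf_le_left).symm.trans (inf_eq h₂ inf_le_right))
  apply Submodule.eq_top_of_finrank_eq
  have := Submodule.finrank_sup_add_finrank_inf_eq ℓ₁ ℓ₂
  omega

lemma Module.End.exists_hasEigenvector_of_finrank_eq_one {f : End K V} {ℓ : Submodule K V}
    (h : finrank K ℓ = 1) (hf : ∀ w ∈ ℓ, f w ∈ ℓ) :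
    ∃ a μ, ℓ = K ∙ a ∧ f.HasEigenvector μ a := by
  obtain ⟨a, ha, rfl⟩ := Submodule.exists_ne_zero_eq_span_singleton h
  obtain ⟨μ, hμ⟩ := mem_span_singleton.mp (hf a (mem_span_singleton_self a))
  exact ⟨a, μ, rfl, mem_eigenspace_iff.mpr hμ.symm, ha⟩

lemma Module.End.exists_eq_smul_one_of_three_invariant_lines (hV : finrank K V = 2)
    {f : End K V} {ℓ : Fin 3 → Submodule K V} (hℓ : Function.Injective ℓ)
    (hline : ∀ i, finrank K (ℓ i) = 1) (hf : ∀ i, ∀ w ∈ ℓ i, f w ∈ ℓ i) :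
    ∃ c : K, f = c • 1 := by
  have : FiniteDimensional K V := Module.finite_of_finrank_eq_succ hV
  choose a μ hℓa ha using fun i => f.exists_hasEigenvector_of_finrank_eq_one (hline i) (hf i)
  by_cases hμ : Function.Injective μ
  · have := (f.eigenvectors_linearIndependent' μ hμ a ha).fintype_card_le_finrank
    rw [Fintype.card_fin, hV] at this
    omega
  obtain ⟨i, j, hij, hne⟩ : ∃ i j, μ i = μ j ∧ i ≠ j := by
    simpa [Function.Injective] using hμ
  have htop : f.eigenspace (μ i) = ⊤ := by
    refine eq_top_iff.mpr ?_
    rw [← sup_eq_top_of_finrank_eq_two hV (hline i) (hline j) (hℓ.ne hne)]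
    refine sup_le ?_ ?_ <;> rw [hℓa, span_singleton_le_iff_mem]
    exacts [(ha i).1, hij ▸ (ha j).1]
  exact ⟨μ i, LinearMap.ext fun v => mem_eigenspace_iff.mp (htop ▸ mem_top : v ∈ _)⟩

def invariantLines {ι : Type*} (f : ι → End K V) : Set (Submodule K V) :=
  {ℓ | finrank K ℓ = 1 ∧ ∀ i, ∀ w ∈ ℓ, f i w ∈ ℓ}

theorem card_invariantLines [Finite K] (hV : finrank K V = 2) {ι : Type*} (f : ι → End K V) :
    Nat.card (invariantLines f) ≤ 2 ∨ Nat.card (invariantLines f) = Nat.card K + 1 := by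
  have : FiniteDimensional K V := Module.finite_of_finrank_eq_succ hV
  have : Finite V := Module.finite_of_finite K
  have : Fintype (invariantLines f) := Fintype.ofFinite _
  refine or_iff_not_imp_left.mpr fun h3 => ?_
  obtain ⟨e⟩ : Nonempty (Fin 3 ↪ invariantLines f) :=
    Function.Embedding.nonempty_of_card_le
      (by rw [Fintype.card_fin, ← Nat.card_eq_fintype_card]; omega)
  have hscalar (i : ι) : ∃ c : K, f i = c • 1 :=
    (f i).exists_eq_smul_one_of_three_invariant_lines hV (ℓ := fun j => (e j).1)
      (Subtype.val_injective.comp e.injective) (fun j => (e j).2.1) (fun j => (e j).2.2 i)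
  have hall (ℓ : Submodule K V) (i : ι) : ∀ w ∈ ℓ, f i w ∈ ℓ := fun w hw => by
    obtain ⟨c, hc⟩ := hscalar i
    simpa [hc] using ℓ.smul_mem c hw
  rw [← Projectivization.card_of_finrank_two K V hV,
    Nat.card_congr (Projectivization.equivSubmodule K V)]
  exact Nat.card_congr (Equiv.subtypeEquivRight fun ℓ => and_iff_left (hall ℓ))

end Lines

section Residue

variable {R k : Type*} [Ring R] [Ring k] {O : Subring R} (φ : O →+* k)

open scoped Classical in
def residue (x : R) : k := if h : x ∈ O then φ ⟨x, h⟩ else 0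

lemma residue_of_mem {x : R} (hx : x ∈ O) : residue φ x = φ ⟨x, hx⟩ :=
  dif_pos hx

@[simp]
lemma residue_coe (x : O) : residue φ x = φ x :=
  residue_of_mem φ x.2

lemma residue_add {x y : R} (hx : x ∈ O) (hy : y ∈ O) :
    residue φ (x + y) = residue φ x + residue φ y := by
  rw [residue_of_mem φ hx, residue_of_mem φ hy, ← map_add]
  exact residue_of_mem φ (add_mem hx hy)

lemma residue_sub {x y : R} (hx : x ∈ O) (hy : y ∈ O) :
    residue φ (x - y) = residue φ x - residue φ y := by
  rw [residue_of_mem φ hx, residue_of_mem φ hy, ← map_sub]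
  exact residue_of_mem φ (sub_mem hx hy)

lemma residue_mul {x y : R} (hx : x ∈ O) (hy : y ∈ O) :
    residue φ (x * y) = residue φ x * residue φ y := by
  rw [residue_of_mem φ hx, residue_of_mem φ hy, ← map_mul]
  exact residue_of_mem φ (mul_mem hx hy)

lemma residue_dotProduct {n : Type*} [Fintype n] {v w : n → R} (hv : ∀ i, v i ∈ O)
    (hw : ∀ i, w i ∈ O) :
    v ⬝ᵥ w ∈ O ∧ residue φ (v ⬝ᵥ w) = residue φ ∘ v ⬝ᵥ residue φ ∘ w := by
  have h := O.subtype.map_dotProduct (fun i => ⟨v i, hv i⟩) (fun i => ⟨w i, hw i⟩)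
  simp only [Subring.coe_subtype, Function.comp_def] at h
  rw [← h]
  refine ⟨Subtype.prop _, ?_⟩
  rw [residue_coe, φ.map_dotProduct]
  congr 1 <;> exact funext fun i => (residue_of_mem φ _).symm

lemma residue_mulVec {n : Type*} [Fintype n] {m : Matrix n n R} {w : n → R}
    (hm : ∀ i j, m i j ∈ O) (hw : ∀ i, w i ∈ O) :
    (∀ i, (m *ᵥ w) i ∈ O) ∧ residue φ ∘ (m *ᵥ w) = m.map (residue φ) *ᵥ residue φ ∘ w :=
  ⟨fun i => (residue_dotProduct φ (hm i) hw).1,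
    funext fun i => (residue_dotProduct φ (hm i) hw).2⟩

lemma exists_residue_comp_eq (hφ : Function.Surjective φ) {n : Type*} (u : n → k) :
    ∃ w : n → R, (∀ i, w i ∈ O) ∧ residue φ ∘ w = u :=
  ⟨fun i => ((Function.surjInv hφ (u i) : O) : R), fun i => (Function.surjInv hφ (u i)).2,
    funext fun i => (residue_coe φ _).trans (Function.surjInv_eq hφ (u i))⟩

end Residue

section ResidueLattice

variable {R k : Type*} [Ring R] [CommRing k] {O : Subring R} (φ : O →+* k) {n : Type*}

def residueLattice (ℓ : Submodule k (n → k)) : Set (n → R) :=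
  {w | (∀ i, w i ∈ O) ∧ residue φ ∘ w ∈ ℓ}

def residueOrder [Fintype n] (ℓ : Submodule k (n → k)) : Set (Matrix n n R) :=
  {m | ∀ w ∈ residueLattice φ ℓ, m *ᵥ w ∈ residueLattice φ ℓ}

lemma op_smul_mem_residueLattice {ℓ : Submodule k (n → k)} {w : n → R}
    (hw : w ∈ residueLattice φ ℓ) {t : R} (ht : t ∈ O) :
    MulOpposite.op t • w ∈ residueLattice φ ℓ := by
  refine ⟨fun i => mul_mem (hw.1 i) ht, ?_⟩
  convert ℓ.smul_mem (residue φ t) hw.2 using 1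
  funext i
  simp [residue_mul φ (hw.1 i) ht, mul_comm]

lemma mem_residueOrder_iff [Fintype n] (hφ : Function.Surjective φ) {m : Matrix n n R}
    (hm : ∀ i j, m i j ∈ O) (ℓ : Submodule k (n → k)) :
    m ∈ residueOrder φ ℓ ↔ ∀ u ∈ ℓ, m.map (residue φ) *ᵥ u ∈ ℓ := by
  constructor
  · intro h u hu
    obtain ⟨w, hw, rfl⟩ := exists_residue_comp_eq φ hφ u
    rw [← (residue_mulVec φ hm hw).2]
    exact (h w ⟨hw, hu⟩).2
  · rintro h w ⟨hw, hwℓ⟩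
    obtain ⟨hmw, hres⟩ := residue_mulVec φ hm hw
    exact ⟨hmw, hres ▸ h _ hwℓ⟩

end ResidueLattice

section LocalField

variable {𝔹 : Type*} [Field 𝔹] {ρ : AbsoluteValue B ℝ} {πB : B} {OB : Subring B}
  {φ : OB →+* 𝔹} {n : Type*} [Fintype n]
  (hOB : ∀ x : B, x ∈ OB ↔ ρ x ≤ 1) (hφker : ∀ x : OB, φ x = 0 ↔ ρ (x : B) < 1)
  (hφsurj : Function.Surjective φ) (hπ0 : 0 < ρ πB) (hπ1 : ρ πB < 1)
  (hπmax : ∀ x : B, x ≠ 0 → ρ x < 1 → ρ x ≤ ρ πB)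

include hφker in
lemma residue_eq_zero_iff {x : B} (hx : x ∈ OB) : residue φ x = 0 ↔ ρ x < 1 := by
  rw [residue_of_mem φ hx]
  exact hφker _

include hφker hπ1 hπmax in
lemma residue_eq_zero_iff_le {x : B} (hx : x ∈ OB) : residue φ x = 0 ↔ ρ x ≤ ρ πB := by
  rw [residue_eq_zero_iff hφker hx]
  refine ⟨fun h => ?_, fun h => h.trans_lt hπ1⟩
  rcases eq_or_ne x 0 with rfl | hx0
  · simp [ρ.nonneg πB]
  · exact hπmax x hx0 h

include hOB hφker in
lemma abv_eq_one_of_residue_ne_zero {x : B} (hx : x ∈ OB) (h : residue φ x ≠ 0) : ρ x = 1 :=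
  ((hOB x).mp hx).antisymm (not_lt.mp fun hlt => h ((residue_eq_zero_iff hφker hx).mpr hlt))

include hOB hπ0 in
lemma mul_inv_mem_of_le {x : B} (hx : ρ x ≤ ρ πB) : x * πB⁻¹ ∈ OB := by
  rw [hOB, map_mul, map_inv₀, ← div_eq_mul_inv]
  exact div_le_one_of_le₀ hx hπ0.le

include hOB hπ0 in
lemma inv_mul_mem_of_le {x : B} (hx : ρ x ≤ ρ πB) : πB⁻¹ * x ∈ OB := by
  rw [hOB, map_mul, map_inv₀, ← div_eq_inv_mul]
  exact div_le_one_of_le₀ hx hπ0.le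

include hOB hφker hφsurj hπ0 hπ1 hπmax in
lemma nbrLattice_eq_residueLattice {v : Fin 2 → B} (hv : ∀ i, v i ∈ OB) :
    nbrLattice ρ πB v = residueLattice φ (𝔹 ∙ residue φ ∘ v) := by
  have hπ : πB ∈ OB := (hOB πB).mpr hπ1.le
  have hπres : residue φ πB = 0 := (residue_eq_zero_iff hφker hπ).mpr hπ1
  ext w
  constructor
  · rintro ⟨z, b, hz, hb, rfl⟩
    have hz' i : z i ∈ OB := (hOB _).mpr (hz i)
    have hb' : b ∈ OB := (hOB b).mpr hb
    refine ⟨fun i => add_mem (mul_mem (hz' i) hπ) (mul_mem (hv i) hb'),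
      mem_span_singleton.mpr ⟨residue φ b, funext fun i => ?_⟩⟩
    simp [residue_add φ (mul_mem (hz' i) hπ) (mul_mem (hv i) hb'), residue_mul φ (hz' i) hπ,
      residue_mul φ (hv i) hb', hπres, mul_comm]
  · rintro ⟨hw, hwℓ⟩
    obtain ⟨c, hc⟩ := mem_span_singleton.mp hwℓ
    obtain ⟨b, rfl⟩ := hφsurj c
    have hd i : w i - v i * b ∈ OB := sub_mem (hw i) (mul_mem (hv i) b.2)
    have hdres i : residue φ (w i - v i * b) = 0 := by
      have hci := congrFun hc i
      simp only [Pi.smul_apply, Function.comp_apply, smul_eq_mul] at hci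
      rw [residue_sub φ (hw i) (mul_mem (hv i) b.2), residue_mul φ (hv i) b.2, residue_coe, ← hci,
        mul_comm, sub_self]
    refine ⟨fun i => (w i - v i * b) * πB⁻¹, b, fun i => (hOB _).mp (mul_inv_mem_of_le hOB hπ0
      ((residue_eq_zero_iff_le hφker hπ1 hπmax (hd i)).mp (hdres i))), (hOB b).mp b.2, ?_⟩
    funext i
    simp [mul_assoc, inv_mul_cancel₀ (ρ.pos_iff.mp hπ0)]

include hOB hφker hφsurj hπ0 hπ1 hπmax in
lemma nbrOrder_eq_residueOrder {v : Fin 2 → B} (hv : ∀ i, v i ∈ OB) :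
    nbrOrder ρ πB v = residueOrder φ (𝔹 ∙ residue φ ∘ v) := by
  simp only [nbrOrder, residueOrder,
    nbrLattice_eq_residueLattice hOB hφker hφsurj hπ0 hπ1 hπmax hv]

include hOB hφker hφsurj hπ0 hπ1 hπmax in
lemma exists_nbrOrder_eq_iff {Δ : Set (Matrix (Fin 2) (Fin 2) B)} :
    (∃ v : Fin 2 → B, (∀ i, ρ (v i) ≤ 1) ∧ (∃ i, ρ πB < ρ (v i)) ∧ Δ = nbrOrder ρ πB v) ↔
      ∃ ℓ : Submodule 𝔹 (Fin 2 → 𝔹), finrank 𝔹 ℓ = 1 ∧ Δ = residueOrder φ ℓ := by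
  have hunit {v : Fin 2 → B} (hv : ∀ i, v i ∈ OB) :
      (∃ i, ρ πB < ρ (v i)) ↔ residue φ ∘ v ≠ 0 := by
    simp only [ne_eq, funext_iff, not_forall, Function.comp_apply, Pi.zero_apply,
      residue_eq_zero_iff_le hφker hπ1 hπmax (hv _), not_le]
  constructor
  · rintro ⟨v, hv, hvπ, rfl⟩
    have hv' i : v i ∈ OB := (hOB _).mpr (hv i)
    exact ⟨_, finrank_span_singleton ((hunit hv').mp hvπ),
      nbrOrder_eq_residueOrder hOB hφker hφsurj hπ0 hπ1 hπmax hv'⟩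
  · rintro ⟨ℓ, hℓ, rfl⟩
    obtain ⟨a, ha, rfl⟩ := Submodule.exists_ne_zero_eq_span_singleton hℓ
    obtain ⟨v, hv, rfl⟩ := exists_residue_comp_eq φ hφsurj a
    exact ⟨v, fun i => (hOB _).mp (hv i), (hunit hv).mpr ha,
      (nbrOrder_eq_residueOrder hOB hφker hφsurj hπ0 hπ1 hπmax hv).symm⟩

include hOB hφker hπ0 hπ1 hπmax in
lemma vecMulVec_mem_residueOrder {ℓ : Submodule 𝔹 (n → 𝔹)} {v g : n → B}
    (hv : v ∈ residueLattice φ ℓ) (hg : ∀ j, g j ∈ OB)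
    (hgℓ : ∀ u ∈ ℓ, residue φ ∘ g ⬝ᵥ u = 0) :
    vecMulVec v (πB⁻¹ • g) ∈ residueOrder φ ℓ := by
  rintro w ⟨hw, hwℓ⟩
  obtain ⟨hs, hsres⟩ := residue_dotProduct φ hg hw
  rw [vecMulVec_mulVec, smul_dotProduct, smul_eq_mul]
  exact op_smul_mem_residueLattice φ hv (inv_mul_mem_of_le hOB hπ0
    ((residue_eq_zero_iff_le hφker hπ1 hπmax hs).mp (hsres.trans (hgℓ _ hwℓ))))

include hOB hφker hπ0 hπ1 in
lemma vecMulVec_notMem_residueOrder {ℓ : Submodule 𝔹 (n → 𝔹)} {v g w : n → B}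
    (hv : ∀ i, v i ∈ OB) (hv0 : residue φ ∘ v ≠ 0) (hg : ∀ j, g j ∈ OB)
    (hw : w ∈ residueLattice φ ℓ) (hgw : residue φ ∘ g ⬝ᵥ residue φ ∘ w ≠ 0) :
    vecMulVec v (πB⁻¹ • g) ∉ residueOrder φ ℓ := by
  intro hm
  obtain ⟨i, hi⟩ := Function.ne_iff.mp hv0
  obtain ⟨hs, hsres⟩ := residue_dotProduct φ hg hw.1
  have hρs := abv_eq_one_of_residue_ne_zero hOB hφker hs (hsres ▸ hgw)
  have hρv := abv_eq_one_of_residue_ne_zero hOB hφker (hv i) hi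
  have hle := (hOB _).mp ((hm w hw).1 i)
  rw [vecMulVec_mulVec, smul_dotProduct, smul_eq_mul] at hle
  simp only [Pi.smul_apply, MulOpposite.smul_eq_mul_unop, MulOpposite.unop_op, map_mul,
    map_inv₀, hρs, hρv, one_mul, mul_one] at hle
  exact hle.not_gt ((one_lt_inv₀ hπ0).mpr hπ1)

include hOB hφker hφsurj hπ0 hπ1 hπmax in
lemma le_of_residueOrder_subset {ℓ ℓ' : Submodule 𝔹 (n → 𝔹)} (hℓ : ℓ ≠ ⊥)
    (h : residueOrder φ ℓ ⊆ residueOrder φ ℓ') : ℓ' ≤ ℓ := by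
  classical
  by_contra hle
  obtain ⟨a', ha'ℓ', ha'ℓ⟩ := SetLike.not_le_iff_exists.mp hle
  obtain ⟨a, haℓ, ha0⟩ := ℓ.exists_mem_ne_zero_of_ne_bot hℓ
  obtain ⟨f, hfa', hfℓ⟩ := ℓ.exists_dual_map_eq_bot_of_notMem ha'ℓ inferInstance
  obtain ⟨v, hv, rfl⟩ := exists_residue_comp_eq φ hφsurj a
  obtain ⟨w, hw, rfl⟩ := exists_residue_comp_eq φ hφsurj a'
  obtain ⟨g, hg, hgf⟩ :=
    exists_residue_comp_eq φ hφsurj fun i => f fun j => if i = j then 1 else 0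
  have hf (u : n → 𝔹) : residue φ ∘ g ⬝ᵥ u = f u := by
    rw [hgf]
    simp [dotProduct, LinearMap.pi_apply_eq_sum_univ f u, mul_comm]
  have hfℓ' (u) (hu : u ∈ ℓ) : f u = 0 := by
    have hfu := Submodule.mem_map_of_mem (f := f) hu
    rwa [hfℓ, Submodule.mem_bot] at hfu
  refine vecMulVec_notMem_residueOrder hOB hφker hπ0 hπ1 hv ha0 hg ⟨hw, ha'ℓ'⟩
    (by rwa [hf]) (h ?_)
  exact vecMulVec_mem_residueOrder hOB hφker hπ0 hπ1 hπmax ⟨hv, haℓ⟩ hg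
    fun u hu => (hf u).trans (hfℓ' u hu)

include hOB hφker hφsurj hπ0 hπ1 hπmax in
lemma residueOrder_injOn : Set.InjOn (residueOrder (n := n) φ) {ℓ | ℓ ≠ ⊥} :=
  fun _ hℓ _ hℓ' h =>
    le_antisymm (le_of_residueOrder_subset hOB hφker hφsurj hπ0 hπ1 hπmax hℓ' h.ge)
      (le_of_residueOrder_subset hOB hφker hφsurj hπ0 hπ1 hπmax hℓ h.le)

include hOB hφker hφsurj hπ0 hπ1 hπmax in
lemma bijOn_residueOrder {S : Set (Matrix (Fin 2) (Fin 2) B)} (hS : ∀ m ∈ S, ∀ i j, m i j ∈ OB) :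
    Set.BijOn (residueOrder φ) (invariantLines fun m : S => (m.1.map (residue φ)).mulVecLin)
      {Δ | (∃ v : Fin 2 → B, (∀ i, ρ (v i) ≤ 1) ∧ (∃ i, ρ πB < ρ (v i)) ∧
        Δ = nbrOrder ρ πB v) ∧ ∀ m ∈ S, m ∈ Δ} := by
  have hneighbor (Δ : Set (Matrix (Fin 2) (Fin 2) B)) :=
    exists_nbrOrder_eq_iff hOB hφker hφsurj hπ0 hπ1 hπmax (Δ := Δ)
  refine ⟨fun ℓ ⟨hℓ, hinv⟩ => ⟨(hneighbor _).mpr ⟨ℓ, hℓ, rfl⟩, fun m hm =>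
      (mem_residueOrder_iff φ hφsurj (hS m hm) ℓ).mpr (hinv ⟨m, hm⟩)⟩, ?_, ?_⟩
  · refine (residueOrder_injOn hOB hφker hφsurj hπ0 hπ1 hπmax).mono fun ℓ hℓ => ?_
    rintro rfl
    simp [invariantLines] at hℓ
  · rintro Δ ⟨hΔ, hSΔ⟩
    obtain ⟨ℓ, hℓ, rfl⟩ := (hneighbor Δ).mp hΔ
    exact ⟨ℓ, ⟨hℓ, fun m => (mem_residueOrder_iff φ hφsurj (hS m m.2) ℓ).mp (hSΔ m m.2)⟩, rfl⟩

end LocalField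

theorem neighbors_biject_with_stable_lines_general
    (ρ : AbsoluteValue B ℝ)
    (πB : B)
    (hπB : 0 < ρ πB ∧ ρ πB < 1 ∧ ∀ x : B, x ≠ 0 → ρ x < 1 → ρ x ≤ ρ πB)
    -- the ring of integers O_B and the residue field 𝔹
    (OB : Subring B) (hOB : ∀ x : B, x ∈ OB ↔ ρ x ≤ 1)
    (𝔹 : Type*) [Field 𝔹] [Fintype 𝔹]
    (φ : OB →+* 𝔹) (hφsurj : Function.Surjective φ)
    (hφker : ∀ x : OB, φ x = 0 ↔ ρ (x : B) < 1)
    -- H is an order contained in Δ₀ = M₂(O_B)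
    (H : Subring (Matrix (Fin 2) (Fin 2) B))
    (hH : ∀ m ∈ H, ∀ i j, ρ (m i j) ≤ 1) :
    Nonempty
      ({ℓ : Submodule 𝔹 (Fin 2 → 𝔹) // Module.finrank 𝔹 ℓ = 1 ∧
          ∀ m (hm : m ∈ H), ∀ w ∈ ℓ,
            (Matrix.of fun i j => φ ⟨m i j, (hOB _).mpr (hH m hm i j)⟩).mulVec w ∈ ℓ} ≃
       {Δ : Set (Matrix (Fin 2) (Fin 2) B) //
          (∃ v : Fin 2 → B, (∀ i, ρ (v i) ≤ 1) ∧ (∃ i, ρ πB < ρ (v i)) ∧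
            Δ = nbrOrder ρ πB v) ∧ ∀ m ∈ H, m ∈ Δ}) ∧
    (Nat.card {Δ : Set (Matrix (Fin 2) (Fin 2) B) //
        (∃ v : Fin 2 → B, (∀ i, ρ (v i) ≤ 1) ∧ (∃ i, ρ πB < ρ (v i)) ∧
          Δ = nbrOrder ρ πB v) ∧ ∀ m ∈ H, m ∈ Δ} = 0 ∨
     Nat.card {Δ : Set (Matrix (Fin 2) (Fin 2) B) //
        (∃ v : Fin 2 → B, (∀ i, ρ (v i) ≤ 1) ∧ (∃ i, ρ πB < ρ (v i)) ∧
          Δ = nbrOrder ρ πB v) ∧ ∀ m ∈ H, m ∈ Δ} = 1 ∨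
     Nat.card {Δ : Set (Matrix (Fin 2) (Fin 2) B) //
        (∃ v : Fin 2 → B, (∀ i, ρ (v i) ≤ 1) ∧ (∃ i, ρ πB < ρ (v i)) ∧
          Δ = nbrOrder ρ πB v) ∧ ∀ m ∈ H, m ∈ Δ} = 2 ∨
     Nat.card {Δ : Set (Matrix (Fin 2) (Fin 2) B) //
        (∃ v : Fin 2 → B, (∀ i, ρ (v i) ≤ 1) ∧ (∃ i, ρ πB < ρ (v i)) ∧
          Δ = nbrOrder ρ πB v) ∧ ∀ m ∈ H, m ∈ Δ} = Fintype.card 𝔹 + 1) := by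
  obtain ⟨hπ0, hπ1, hπmax⟩ := hπB
  have hHOB (m) (hm : m ∈ H) (i j) : m i j ∈ OB := (hOB _).mpr (hH m hm i j)
  have hbij := bijOn_residueOrder hOB hφker hφsurj hπ0 hπ1 hπmax (S := H) hHOB
  have hstable : {ℓ : Submodule 𝔹 (Fin 2 → 𝔹) // finrank 𝔹 ℓ = 1 ∧
      ∀ m (hm : m ∈ H), ∀ w ∈ ℓ, (Matrix.of fun i j => φ ⟨m i j, hHOB m hm i j⟩) *ᵥ w ∈ ℓ} ≃
      invariantLines fun m : (H : Set (Matrix (Fin 2) (Fin 2) B)) =>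
        (m.1.map (residue φ)).mulVecLin :=
    Equiv.subtypeEquivRight fun ℓ => and_congr_right fun _ => by
      simp only [Subtype.forall, mulVecLin_apply]
      refine forall₂_congr fun m hm => ?_
      rw [show (Matrix.of fun i j => φ ⟨m i j, hHOB m hm i j⟩) = m.map (residue φ) from
        Matrix.ext fun i j => (residue_of_mem φ _).symm]
  refine ⟨⟨hstable.trans hbij.equiv⟩, ?_⟩
  have hcard := card_invariantLines (finrank_fin_fun 𝔹)
    fun m : (H : Set (Matrix (Fin 2) (Fin 2) B)) => (m.1.map (residue φ)).mulVecLin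
  have hcard' := Nat.card_congr hbij.equiv
  simp only [Set.coe_ofPred, SetLike.mem_coe] at hcard'
  rw [← hcard', ← Nat.card_eq_fintype_card]
  omega

/-- let Δ₀ = M₂(O_B) and H ⊆ Δ₀ an O_K-order, 𝔹 = O_B/π_B O_B the
(finite) residue field with residue map φ, and ℍ the image of H in M₂(𝔹).  The
neighbors of Δ₀ in the Bruhat–Tits tree containing H are in bijection with the
one-dimensional ℍ-stable subspaces of 𝔹²; consequently their number is
0, 1, 2, or q^n + 1 where q^n = |𝔹|. -/
theorem neighbors_biject_with_stable_lines
    (ρ : AbsoluteValue B ℝ) (hna : IsNonarchimedean ρ)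
    (πB : B)
    (hπB : 0 < ρ πB ∧ ρ πB < 1 ∧ ∀ x : B, x ≠ 0 → ρ x < 1 → ρ x ≤ ρ πB)
    (hdisc : ∀ x : B, x ≠ 0 → ∃ k : ℤ, ρ x = ρ πB ^ k)
    -- the ring of integers O_B and the residue field 𝔹
    (OB : Subring B) (hOB : ∀ x : B, x ∈ OB ↔ ρ x ≤ 1)
    (𝔹 : Type*) [Field 𝔹] [Fintype 𝔹]
    (φ : OB →+* 𝔹) (hφsurj : Function.Surjective φ)
    (hφker : ∀ x : OB, φ x = 0 ↔ ρ (x : B) < 1)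
    -- H is an order contained in Δ₀ = M₂(O_B)
    (H : Subring (Matrix (Fin 2) (Fin 2) B))
    (hH : ∀ m ∈ H, ∀ i j, ρ (m i j) ≤ 1) :
    Nonempty
      ({ℓ : Submodule 𝔹 (Fin 2 → 𝔹) // Module.finrank 𝔹 ℓ = 1 ∧
          ∀ m (hm : m ∈ H), ∀ w ∈ ℓ,
            (Matrix.of fun i j => φ ⟨m i j, (hOB _).mpr (hH m hm i j)⟩).mulVec w ∈ ℓ} ≃
       {Δ : Set (Matrix (Fin 2) (Fin 2) B) //
          (∃ v : Fin 2 → B, (∀ i, ρ (v i) ≤ 1) ∧ (∃ i, ρ πB < ρ (v i)) ∧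
            Δ = nbrOrder ρ πB v) ∧ ∀ m ∈ H, m ∈ Δ}) ∧
    (Nat.card {Δ : Set (Matrix (Fin 2) (Fin 2) B) //
        (∃ v : Fin 2 → B, (∀ i, ρ (v i) ≤ 1) ∧ (∃ i, ρ πB < ρ (v i)) ∧
          Δ = nbrOrder ρ πB v) ∧ ∀ m ∈ H, m ∈ Δ} = 0 ∨
     Nat.card {Δ : Set (Matrix (Fin 2) (Fin 2) B) //
        (∃ v : Fin 2 → B, (∀ i, ρ (v i) ≤ 1) ∧ (∃ i, ρ πB < ρ (v i)) ∧
          Δ = nbrOrder ρ πB v) ∧ ∀ m ∈ H, m ∈ Δ} = 1 ∨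
     Nat.card {Δ : Set (Matrix (Fin 2) (Fin 2) B) //
        (∃ v : Fin 2 → B, (∀ i, ρ (v i) ≤ 1) ∧ (∃ i, ρ πB < ρ (v i)) ∧
          Δ = nbrOrder ρ πB v) ∧ ∀ m ∈ H, m ∈ Δ} = 2 ∨
     Nat.card {Δ : Set (Matrix (Fin 2) (Fin 2) B) //
        (∃ v : Fin 2 → B, (∀ i, ρ (v i) ≤ 1) ∧ (∃ i, ρ πB < ρ (v i)) ∧
          Δ = nbrOrder ρ πB v) ∧ ∀ m ∈ H, m ∈ Δ} = Fintype.card 𝔹 + 1) :=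
  neighbors_biject_with_stable_lines_general ρ πB hπB OB hOB 𝔹 φ hφsurj hφker H hH

end
end

section
/- Let B be a central division algebra over a local field and suppose L ⊆ M₂(B) is a 2n-dimensional commutative semisimple subalgebra that is not a field; then L contains a nontrivial idempotent which may be conjugated to e = diag(1,0), and the set of maximal orders of M₂(B) containing e is exactly {Δ_t : t ∈ ℤ} where Δ_t = (O_B, π_B^t O_B; π_B^{-t} O_B, O_B); since O_L lies in the ring of diagonal matrices with entries in O_B, which is contained in every Δ_t, the branch S(O_L) is a maximal path (a line isomorphic to ℝ-graph) in the Bruhat–Tits tree. -/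
/-!
A maximal order `u M₂(O_B) u⁻¹` containing `e = diag(1,0)` also contains `1 - e`, so `u⁻¹ Eᵢᵢ u`
is integral for both diagonal idempotents `Eᵢᵢ`. Dividing each row of `u` by an entry of largest
absolute value gives `u = d g` with `d` diagonal and `g ∈ GL₂(O_B)`, so the order is
`d M₂(O_B) d⁻¹`; as the valuation is discrete, this is `Δ_t` with `|π_B|^t = |d₀ / d₁|`.
Conversely every `Δ_t` is such a diagonal conjugate, and it contains the integral diagonal
matrices, hence `O_L`.
-/

noncomputable section

variable {B : Type*} [DivisionRing B]

/-- A maximal order of M₂(B): a conjugate u·M₂(O_B)·u⁻¹ of the standard maximal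
order M₂(O_B). -/
def IsMaxOrder (ρ : AbsoluteValue B ℝ) (Δ : Set (Matrix (Fin 2) (Fin 2) B)) :
    Prop :=
  ∃ u uinv : Matrix (Fin 2) (Fin 2) B, u * uinv = 1 ∧ uinv * u = 1 ∧
    Δ = {x | ∃ m : Matrix (Fin 2) (Fin 2) B,
      (∀ i j, ρ (m i j) ≤ 1) ∧ x = u * m * uinv}

/-- The maximal order Δ_t = (O_B, π_B^t O_B; π_B^{-t} O_B, O_B). -/
def standardApartmentOrder (ρ : AbsoluteValue B ℝ) (πB : B) (t : ℤ) :
    Set (Matrix (Fin 2) (Fin 2) B) :=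
  {m | ρ (m 0 0) ≤ 1 ∧ ρ (m 1 1) ≤ 1 ∧
    ρ (m 0 1) ≤ ρ πB ^ t ∧ ρ (m 1 0) ≤ ρ πB ^ (-t)}

/-- The idempotent e = diag(1,0) in M₂(B). -/
def diagIdem : Matrix (Fin 2) (Fin 2) B :=
  fun i j => if i = 0 ∧ j = 0 then 1 else 0

open Matrix

theorem Matrix.mul_single_mul_apply {α ι : Type*} [Semiring α] [Fintype ι] [DecidableEq ι]
    (M N : Matrix ι ι α) (i i' k j : ι) (c : α) :
    (M * single i i' c * N) k j = M k i * c * N i' j := by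
  simp [Matrix.mul_apply, Matrix.single_apply, ite_and, Finset.sum_ite_eq]

theorem Matrix.exists_ne_zero_of_mul_eq_one {α ι : Type*} [Semiring α] [Nontrivial α]
    [Fintype ι] [DecidableEq ι] {u uinv : Matrix ι ι α} (hu : u * uinv = 1) (i : ι) :
    ∃ j, u i j ≠ 0 := by
  by_contra! hrow
  have := congrFun₂ hu i i
  simp [Matrix.mul_apply, hrow] at this

section Diagonal

variable {ι : Type*} [Fintype ι] [DecidableEq ι] {d : ι → B}

theorem diagonal_mul_diagonal_inv (hd : ∀ i, d i ≠ 0) : diagonal d * diagonal d⁻¹ = 1 := by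
  rw [diagonal_mul_diagonal, ← diagonal_one]
  exact congrArg diagonal (funext fun i => mul_inv_cancel₀ (hd i))

theorem diagonal_inv_mul_diagonal (hd : ∀ i, d i ≠ 0) : diagonal d⁻¹ * diagonal d = 1 := by
  rw [diagonal_mul_diagonal, ← diagonal_one]
  exact congrArg diagonal (funext fun i => inv_mul_cancel₀ (hd i))

end Diagonal

section Conjugate

variable {M : Type*} [Monoid M]

def conjugate (u uinv : M) (S : Set M) : Set M :=
  {x | ∃ m ∈ S, x = u * m * uinv}

variable {u uinv : M}

theorem mem_conjugate_iff (hu : u * uinv = 1) (hu' : uinv * u = 1) {S : Set M} {x : M} :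
    x ∈ conjugate u uinv S ↔ uinv * x * u ∈ S := by
  constructor
  · rintro ⟨m, hm, rfl⟩
    rwa [show uinv * (u * m * uinv) * u = (uinv * u) * m * (uinv * u) by simp only [mul_assoc],
      hu', one_mul, mul_one]
  · intro hx
    refine ⟨_, hx, ?_⟩
    rw [show u * (uinv * x * u) * uinv = (u * uinv) * x * (u * uinv) by simp only [mul_assoc],
      hu, one_mul, mul_one]

theorem conjugate_eq_conjugate_of_mem {d dinv : M} (hu : u * uinv = 1) (hu' : uinv * u = 1)
    (hd : d * dinv = 1) (hd' : dinv * d = 1) {S : Type*} [SetLike S M] [SubmonoidClass S M]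
    {s : S} (hdu : dinv * u ∈ s) (hud : uinv * d ∈ s) :
    conjugate u uinv s = conjugate d dinv s := by
  ext x
  rw [mem_conjugate_iff hu hu', mem_conjugate_iff hd hd', SetLike.mem_coe, SetLike.mem_coe]
  constructor
  · intro hx
    convert mul_mem (mul_mem hdu hx) hud using 1
    rw [show dinv * u * (uinv * x * u) * (uinv * d)
        = dinv * (u * uinv) * x * (u * uinv) * d by simp only [mul_assoc], hu, mul_one, mul_one]
  · intro hx
    convert mul_mem (mul_mem hud hx) hdu using 1
    rw [show uinv * d * (dinv * x * d) * (dinv * u)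
        = uinv * (d * dinv) * x * (d * dinv) * u by simp only [mul_assoc], hd, mul_one, mul_one]

end Conjugate

section IntegerMatrices

variable (ρ : AbsoluteValue B ℝ) (hna : IsNonarchimedean ρ)

def integerSubring : Subring B where
  carrier := {x | ρ x ≤ 1}
  mul_mem' {x y} hx hy := by
    show ρ (x * y) ≤ 1
    simpa only [map_mul] using mul_le_one₀ hx (ρ.nonneg y) hy
  one_mem' := by simp
  add_mem' {x y} hx hy := (hna x y).trans (max_le hx hy)
  zero_mem' := by simp
  neg_mem' := by simp

variable (ι : Type*) [Fintype ι] [DecidableEq ι]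

def integerMatrices : Subring (Matrix ι ι B) :=
  (integerSubring ρ hna).matrix

variable {ρ hna ι}

theorem mem_integerMatrices {m : Matrix ι ι B} :
    m ∈ integerMatrices ρ hna ι ↔ ∀ i j, ρ (m i j) ≤ 1 :=
  Iff.rfl

theorem mem_conjugate_diagonal_iff {d : ι → B} (hd : ∀ i, d i ≠ 0) {x : Matrix ι ι B} :
    x ∈ conjugate (diagonal d) (diagonal d⁻¹) (integerMatrices ρ hna ι) ↔
      ∀ i j, ρ (x i j) ≤ ρ (d i) / ρ (d j) := by
  rw [mem_conjugate_iff (diagonal_mul_diagonal_inv hd) (diagonal_inv_mul_diagonal hd),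
    SetLike.mem_coe, mem_integerMatrices]
  refine forall₂_congr fun i j => ?_
  have hdi := ρ.pos (hd i)
  have hdj := ρ.pos (hd j)
  simp only [mul_diagonal, diagonal_mul, Pi.inv_apply, map_mul, map_inv₀]
  rw [mul_assoc, inv_mul_le_iff₀ hdi, mul_one, ← le_div_iff₀ hdj]

/- Dividing each row of `u` by an entry of largest absolute value makes `d⁻¹ u` integral, and the
integrality of `u⁻¹ Eᵢᵢ u` then makes `u⁻¹ d` integral. -/
theorem exists_diagonal_conjugate_eq {u uinv : Matrix ι ι B} (hu : u * uinv = 1)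
    (hu' : uinv * u = 1)
    (hsingle : ∀ i, single i i (1 : B) ∈ conjugate u uinv (integerMatrices ρ hna ι)) :
    ∃ d : ι → B, (∀ i, d i ≠ 0) ∧ conjugate u uinv (integerMatrices ρ hna ι) =
      conjugate (diagonal d) (diagonal d⁻¹) (integerMatrices ρ hna ι) := by
  have hcol : ∀ i k j, ρ (uinv k i * u i j) ≤ 1 := fun i k j => by
    have := mem_integerMatrices.1 ((mem_conjugate_iff hu hu').1 (hsingle i)) k j
    rwa [mul_single_mul_apply, mul_one] at this
  choose jmax hjmax using fun i =>
    Finset.exists_max_image Finset.univ (fun j => ρ (u i j)) ⟨i, Finset.mem_univ i⟩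
  set d := fun i => u i (jmax i)
  have hd : ∀ i, d i ≠ 0 := fun i => by
    obtain ⟨j, hj⟩ := exists_ne_zero_of_mul_eq_one hu i
    exact ρ.pos_iff.1 ((ρ.pos hj).trans_le ((hjmax i).2 j (Finset.mem_univ j)))
  refine ⟨d, hd, conjugate_eq_conjugate_of_mem hu hu' (diagonal_mul_diagonal_inv hd)
    (diagonal_inv_mul_diagonal hd) (mem_integerMatrices.2 fun i j => ?_)
    (mem_integerMatrices.2 fun k i => ?_)⟩
  · rw [diagonal_mul, Pi.inv_apply, map_mul, map_inv₀, inv_mul_le_one₀ (ρ.pos (hd i))]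
    exact (hjmax i).2 j (Finset.mem_univ j)
  · rw [mul_diagonal]
    exact hcol i k (jmax i)

end IntegerMatrices

theorem one_sub_mem_conjugate {R S : Type*} [Ring R] [SetLike S R] [SubringClass S R] {s : S}
    {u uinv x : R} (hu : u * uinv = 1) (hu' : uinv * u = 1) (hx : x ∈ conjugate u uinv s) :
    1 - x ∈ conjugate u uinv s := by
  rw [mem_conjugate_iff hu hu'] at hx ⊢
  rw [mul_sub, sub_mul, mul_one, hu']
  exact sub_mem (one_mem s) hx

section TwoByTwo

variable {ρ : AbsoluteValue B ℝ} {hna : IsNonarchimedean ρ}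

theorem diagIdem_eq_single : (diagIdem : Matrix (Fin 2) (Fin 2) B) = single 0 0 1 := by
  ext i j
  simp [diagIdem, single_apply, eq_comm]

theorem one_sub_diagIdem : 1 - (diagIdem : Matrix (Fin 2) (Fin 2) B) = single 1 1 1 := by
  ext i j
  fin_cases i <;> fin_cases j <;> simp [diagIdem]

theorem single_mem_conjugate_of_diagIdem_mem {u uinv : Matrix (Fin 2) (Fin 2) B}
    (hu : u * uinv = 1) (hu' : uinv * u = 1)
    (he : diagIdem ∈ conjugate u uinv (integerMatrices ρ hna (Fin 2))) :
    ∀ i, single i i 1 ∈ conjugate u uinv (integerMatrices ρ hna (Fin 2)) :=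
  Fin.forall_fin_two.2 ⟨diagIdem_eq_single (B := B) ▸ he,
    one_sub_diagIdem (B := B) ▸ one_sub_mem_conjugate hu hu' he⟩

theorem isMaxOrder_iff {Δ : Set (Matrix (Fin 2) (Fin 2) B)} :
    IsMaxOrder ρ Δ ↔ ∃ u uinv : Matrix (Fin 2) (Fin 2) B, u * uinv = 1 ∧ uinv * u = 1 ∧
      Δ = conjugate u uinv (integerMatrices ρ hna (Fin 2)) :=
  Iff.rfl

theorem standardApartmentOrder_eq_conjugate {πB : B} {d : Fin 2 → B} (hd : ∀ i, d i ≠ 0)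
    {t : ℤ} (ht : ρ (d 0) / ρ (d 1) = ρ πB ^ t) :
    standardApartmentOrder ρ πB t =
      conjugate (diagonal d) (diagonal d⁻¹) (integerMatrices ρ hna (Fin 2)) := by
  have ht' : ρ (d 1) / ρ (d 0) = ρ πB ^ (-t) := by rw [_root_.zpow_neg, ← ht, inv_div]
  ext x
  rw [mem_conjugate_diagonal_iff hd, Fin.forall_fin_two, Fin.forall_fin_two,
    Fin.forall_fin_two, div_self (ρ.ne_zero (hd 0)), div_self (ρ.ne_zero (hd 1)), ht, ht']
  simp only [standardApartmentOrder, Set.mem_ofPred_eq]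
  tauto

theorem mem_standardApartmentOrder_of_offDiag_eq_zero {πB : B} {m : Matrix (Fin 2) (Fin 2) B}
    (h01 : m 0 1 = 0) (h10 : m 1 0 = 0) (h00 : ρ (m 0 0) ≤ 1) (h11 : ρ (m 1 1) ≤ 1) (t : ℤ) :
    m ∈ standardApartmentOrder ρ πB t := by
  refine ⟨h00, h11, ?_, ?_⟩
  · rw [h01, map_zero]
    exact zpow_nonneg (ρ.nonneg πB) t
  · rw [h10, map_zero]
    exact zpow_nonneg (ρ.nonneg πB) (-t)

end TwoByTwo

/-- Theorem 1.1, part 3, key step: suppose O_L ⊆ M₂(B) is an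
order consisting of diagonal matrices with integral entries and containing the
nontrivial idempotent e = diag(1,0) (as happens, after conjugation, for the ring
of integers of a 2n-dimensional commutative semisimple subalgebra L that is not
a field).  Then the maximal orders containing O_L are exactly the orders
Δ_t = (O_B, π_B^t O_B; π_B^{-t} O_B, O_B), t ∈ ℤ; i.e. the branch S(O_L) is a
maximal path in the Bruhat–Tits tree. -/
theorem branch_of_nonfield_is_maximal_path
    (ρ : AbsoluteValue B ℝ) (hna : IsNonarchimedean ρ)
    (πB : B)
    (hπB : 0 < ρ πB ∧ ρ πB < 1 ∧ ∀ x : B, x ≠ 0 → ρ x < 1 → ρ x ≤ ρ πB)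
    (hdisc : ∀ x : B, x ≠ 0 → ∃ k : ℤ, ρ x = ρ πB ^ k)
    (OL : Subring (Matrix (Fin 2) (Fin 2) B))
    (hdiag : ∀ m ∈ OL, m 0 1 = 0 ∧ m 1 0 = 0 ∧ ρ (m 0 0) ≤ 1 ∧ ρ (m 1 1) ≤ 1)
    (hidem : (diagIdem : Matrix (Fin 2) (Fin 2) B) ∈ OL) :
    {Δ : Set (Matrix (Fin 2) (Fin 2) B) | IsMaxOrder ρ Δ ∧ ∀ m ∈ OL, m ∈ Δ} =
      {Δ | ∃ t : ℤ, Δ = standardApartmentOrder ρ πB t} := by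
  ext Δ
  constructor
  · rintro ⟨hΔ, hOL⟩
    obtain ⟨u, uinv, hu, hu', rfl⟩ := (isMaxOrder_iff (hna := hna)).1 hΔ
    obtain ⟨d, hd, hconj⟩ := exists_diagonal_conjugate_eq hu hu'
      (single_mem_conjugate_of_diagIdem_mem hu hu' (hOL _ hidem))
    obtain ⟨a, ha⟩ := hdisc _ (hd 0)
    obtain ⟨b, hb⟩ := hdisc _ (hd 1)
    exact ⟨a - b, by
      rw [hconj, standardApartmentOrder_eq_conjugate hd (by rw [ha, hb, zpow_sub₀ hπB.1.ne'])]⟩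
  · rintro ⟨t, rfl⟩
    have hd : ∀ i, ![πB ^ t, 1] i ≠ 0 :=
      Fin.forall_fin_two.2 ⟨zpow_ne_zero _ (ρ.pos_iff.1 hπB.1), one_ne_zero⟩
    refine ⟨?_, fun m hm => ?_⟩
    · rw [standardApartmentOrder_eq_conjugate (hna := hna) hd (by simp [map_zpow₀])]
      exact isMaxOrder_iff.2
        ⟨_, _, diagonal_mul_diagonal_inv hd, diagonal_inv_mul_diagonal hd, rfl⟩
    · obtain ⟨h01, h10, h00, h11⟩ := hdiag m hm
      exact mem_standardApartmentOrder_of_offDiag_eq_zero h01 h10 h00 h11 t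

end
end
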